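/- arXiv:2206.03458 — 2 statements merged into one kernel-verified Lean document; each statement's English description precedes it below -/
import Mathlib

section
/- For n ≥ 1 and positive integers a_1, ..., a_{n+1}, b_1, ..., b_n, the alternating sum over all permutations σ of {1,...,n+1} of sgn(σ)·x_{a_{σ(1)}} x_{b_1} x_{a_{σ(2)}} x_{b_2} ⋯ x_{a_{σ(n)}} x_{b_n} x_{a_{σ(n+1)}} lies in the Q-subspace of X spanned by all block shuffle products u ⋄ v with u, v nonconstant. -/
noncomputable section
namespace BlockShuffle

/-- The underlying vector space of `𝔛 = ℚ⟨x₁, x₂, …⟩`, with words as basis. -/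
abbrev XX : Type := List ℕ →₀ ℚ

/-- The basis word `x_{a₁} ⋯ x_{a_d}`. -/
def wX (w : List ℕ) : XX := Finsupp.single w 1

/-- Left multiplication by the generator `x_a`. -/
def consX (a : ℕ) : XX →ₗ[ℚ] XX := Finsupp.lmapDomain ℚ ℚ (List.cons a)

/-- Left multiplication by the word `x_{a₁} ⋯ x_{a_d}`. -/
def consListX (w : List ℕ) : XX →ₗ[ℚ] XX := Finsupp.lmapDomain ℚ ℚ (w ++ ·)

/-- The shift operator `s_k` with `s_k(x_i w) = x_{i+k} w`, `s_k(1) = 0`. -/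
def shiftX (k : ℕ) : XX →ₗ[ℚ] XX :=
  Finsupp.lsum ℚ fun w => LinearMap.toSpanSingleton ℚ XX
    (match w with
     | [] => 0
     | i :: t => Finsupp.single ((i + k) :: t) (1 : ℚ))

/-- The block shuffle product `⋄` on basis words. -/
def dshW : List ℕ → List ℕ → XX
  | [], v => wX v
  | u, [] => wX u
  | a :: u, b :: v =>
      consX a (dshW u (b :: v)) + consX b (dshW (a :: u) v) - shiftX (a + b) (dshW u v)
  termination_by u v => u.length + v.length

/-- The block shuffle product `⋄ : 𝔛 × 𝔛 → 𝔛`, as a bilinear map. -/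
def dshL : XX →ₗ[ℚ] XX →ₗ[ℚ] XX :=
  Finsupp.lsum ℚ fun u => LinearMap.toSpanSingleton ℚ (XX →ₗ[ℚ] XX)
    (Finsupp.lsum ℚ fun v => LinearMap.toSpanSingleton ℚ XX (dshW u v))

/-- The maps `f_c` on basis words. -/
def fW : ℕ → List ℕ → List ℕ → XX
  | c, [], v => wX (c :: v)
  | c, u, [] => wX (c :: u)
  | c, a :: u, b :: v =>
      consX c (fW a u (b :: v)) + consX c (fW b (a :: u) v) - fW (c + a + b) u v
  termination_by _ u v => u.length + v.length

/-- The bilinear maps `f_c : 𝔛 × 𝔛 → 𝔛`. -/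
def fL (c : ℕ) : XX →ₗ[ℚ] XX →ₗ[ℚ] XX :=
  Finsupp.lsum ℚ fun u => LinearMap.toSpanSingleton ℚ (XX →ₗ[ℚ] XX)
    (Finsupp.lsum ℚ fun v => LinearMap.toSpanSingleton ℚ XX (fW c u v))

/-- The anti-automorphism `S` of `𝔛` with `S(x_k) = -x_k`. -/
def SX : XX →ₗ[ℚ] XX :=
  Finsupp.lsum ℚ fun w => LinearMap.toSpanSingleton ℚ XX (((-1 : ℚ) ^ w.length) • wX w.reverse)

/-- The subspace `𝔛⁺ ⋄ 𝔛⁺` spanned by block shuffle products of nonconstant elements. -/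
def diamondSpan : Submodule ℚ XX :=
  Submodule.span ℚ
    {x | ∃ u v : List ℕ, u ≠ [] ∧ v ≠ [] ∧ (∀ i ∈ u, 1 ≤ i) ∧ (∀ i ∈ v, 1 ≤ i) ∧ x = dshW u v}

/-- The interleaved word `x_{a₁} x_{b₁} x_{a₂} x_{b₂} ⋯`. -/
def interleaveW : List ℕ → List ℕ → List ℕ
  | a :: as, b :: bs => a :: b :: interleaveW as bs
  | as, [] => as
  | [], _ => []


section Aux
open Equiv Equiv.Perm

lemma consX_wX (a : ℕ) (w : List ℕ) : consX a (wX w) = wX (a :: w) := by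
  simp [consX, wX, Finsupp.lmapDomain_apply, Finsupp.mapDomain_single]

lemma shiftX_wX_cons (k i : ℕ) (t : List ℕ) : shiftX k (wX (i :: t)) = wX ((i + k) :: t) := by
  simp [shiftX, wX, Finsupp.lsum_single, LinearMap.toSpanSingleton_apply]

lemma shiftX_wX_nil (k : ℕ) : shiftX k (wX []) = 0 := by
  simp [shiftX, wX, Finsupp.lsum_single, LinearMap.toSpanSingleton_apply]

lemma dshW_nil_left (v : List ℕ) : dshW [] v = wX v := by rw [dshW]

lemma dshW_nil_right (u : List ℕ) : dshW u [] = wX u := by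
  cases u
  · rw [dshW]
  · rw [dshW]
    simp

lemma dshW_cons_cons (a b : ℕ) (u v : List ℕ) :
    dshW (a :: u) (b :: v)
      = consX a (dshW u (b :: v)) + consX b (dshW (a :: u) v) - shiftX (a + b) (dshW u v) := by
  rw [dshW]

lemma dshW_cons_single (p r : ℕ) (w : List ℕ) :
    dshW (p :: w) [r]
      = consX p (dshW w [r]) + wX (r :: p :: w) - shiftX (p + r) (wX w) := by
  rw [dshW_cons_cons, dshW_nil_right, dshW_nil_right, consX_wX]

/-- tail of an interleave whose first list is nonempty -/

def restI : List ℕ → List ℕ → List ℕ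
  | xs, [] => xs
  | xs, y :: ys => y :: interleaveW xs ys

lemma interleaveW_cons (x : ℕ) (xs ys : List ℕ) :
    interleaveW (x :: xs) ys = x :: restI xs ys := by
  cases ys <;> rfl

lemma interleave_rot : ∀ (xs ys : List ℕ) (x : ℕ), ys.length = xs.length + 1 →
    interleaveW (x :: xs) ys = x :: interleaveW ys xs := by
  intro xs
  induction xs with
  | nil => intro ys x h; match ys, h with
           | [y], _ => rfl
  | cons b bs ih =>
    intro ys x h
    match ys, h with
    | y :: ys', h =>
      have h' : ys'.length = bs.length + 1 := by simpa using h
      show x :: y :: interleaveW (b :: bs) ys' = x :: interleaveW (y :: ys') (b :: bs)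
      rw [show interleaveW (y :: ys') (b :: bs) = y :: b :: interleaveW ys' bs from rfl]
      rw [ih ys' b h']

lemma mem_interleaveW : ∀ (u v : List ℕ) (x : ℕ), x ∈ interleaveW u v → x ∈ u ∨ x ∈ v := by
  intro u
  induction u with
  | nil =>
    intro v x h
    cases v with
    | nil => simp [interleaveW] at h
    | cons b bs => simp [interleaveW] at h
  | cons a as ih =>
    intro v x h
    cases v with
    | nil => left; simpa [interleaveW] using h
    | cons b bs =>
      simp only [interleaveW, List.mem_cons] at h
      rcases h with h | h | h
      · left; simp [h]
      · right; simp [h]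
      · rcases ih bs x h with h' | h'
        · left; simp [h', List.mem_cons]
        · right; simp [h', List.mem_cons]


lemma alt_vanish {N : ℕ} (g : Perm (Fin N) → XX) (i j : Fin N) (hij : i ≠ j)
    (hg : ∀ σ, g (σ * Equiv.swap i j) = g σ) :
    ∑ σ : Perm (Fin N), ((Perm.sign σ : ℤˣ) : ℤ) • g σ = 0 := by
  set S := ∑ σ : Perm (Fin N), ((Perm.sign σ : ℤˣ) : ℤ) • g σ with hS
  have key : S = -S := by
    calc S = ∑ σ : Perm (Fin N), ((Perm.sign (σ * Equiv.swap i j) : ℤˣ) : ℤ) •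
              g (σ * Equiv.swap i j) := by
            exact (Fintype.sum_equiv (Equiv.mulRight (Equiv.swap i j)) _ _ (fun σ => rfl)).symm
      _ = ∑ σ : Perm (Fin N), -(((Perm.sign σ : ℤˣ) : ℤ) • g σ) := by
            refine Finset.sum_congr rfl fun σ _ => ?_
            rw [hg, Perm.sign_mul, Perm.sign_swap hij]
            push_cast
            rw [mul_neg_one, neg_smul]
      _ = -S := by rw [← Finset.sum_neg_distrib]
  have h2 : S + S = 0 := by nth_rewrite 1 [key]; simp
  have h3 : (2 : ℚ) • S = 0 := by rw [two_smul]; exact h2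
  have := congrArg (fun x => ((2:ℚ)⁻¹) • x) h3
  simpa [smul_smul] using this

lemma apply_mul_swap_of_ne {N : ℕ} (σ : Perm (Fin N)) (i j x : Fin N)
    (hx1 : x ≠ i) (hx2 : x ≠ j) : (σ * Equiv.swap i j) x = σ x := by
  rw [Perm.mul_apply, Equiv.swap_apply_of_ne_of_ne hx1 hx2]

lemma apply_mul_swap_left {N : ℕ} (σ : Perm (Fin N)) (i j : Fin N) :
    (σ * Equiv.swap i j) i = σ j := by rw [Perm.mul_apply, Equiv.swap_apply_left]

lemma apply_mul_swap_right {N : ℕ} (σ : Perm (Fin N)) (i j : Fin N) :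
    (σ * Equiv.swap i j) j = σ i := by rw [Perm.mul_apply, Equiv.swap_apply_right]


-- ne-lemmas
section NeLemmas
variable {k : ℕ}
lemma ne_s1_0 : (Fin.succ (0 : Fin (k+2)) : Fin (k+3)) ≠ 0 := Fin.succ_ne_zero _
lemma ne_s2_0 : ((0 : Fin (k+1)).succ.succ : Fin (k+3)) ≠ 0 := Fin.succ_ne_zero _
lemma ne_s2_s1 : ((0 : Fin (k+1)).succ.succ : Fin (k+3)) ≠ Fin.succ (0 : Fin (k+2)) :=
  fun h => Fin.succ_ne_zero _ (Fin.succ_inj.mp h)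
lemma ne_s1_s2 : (Fin.succ (0 : Fin (k+2)) : Fin (k+3)) ≠ (0 : Fin (k+1)).succ.succ :=
  fun h => Fin.succ_ne_zero _ (Fin.succ_inj.mp h).symm
lemma ne_i3_0 (i : Fin k) : (i.succ.succ.succ : Fin (k+3)) ≠ 0 := Fin.succ_ne_zero _
lemma ne_i3_s1 (i : Fin k) : (i.succ.succ.succ : Fin (k+3)) ≠ Fin.succ (0 : Fin (k+2)) :=
  fun h => Fin.succ_ne_zero _ (Fin.succ_inj.mp h)
lemma ne_i3_s2 (i : Fin k) : (i.succ.succ.succ : Fin (k+3)) ≠ (0 : Fin (k+1)).succ.succ :=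
  fun h => Fin.succ_ne_zero _ (Fin.succ_inj.mp (Fin.succ_inj.mp h))
end NeLemmas

lemma dshW_single_comm (p r : ℕ) : dshW [p] [r] = dshW [r] [p] := by
  rw [dshW_cons_single, dshW_cons_single, dshW_nil_left, dshW_nil_left, consX_wX, consX_wX,
    shiftX_wX_nil, shiftX_wX_nil]
  abel

lemma dshW_expand2 (P q r G : ℕ) (R : List ℕ) :
    dshW (P :: q :: G :: R) [r]
      = consX P (consX q (dshW (G :: R) [r]))
        + (wX (r :: P :: q :: G :: R) + wX (P :: r :: q :: G :: R))
        - wX (P :: (G + (q + r)) :: R)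
        - wX ((q + (P + r)) :: G :: R) := by
  rw [dshW_cons_single P r (q :: G :: R), dshW_cons_single q r (G :: R)]
  rw [map_sub (consX P), map_add (consX P)]
  rw [shiftX_wX_cons, shiftX_wX_cons, consX_wX, consX_wX]
  abel

/-- the inner telescoping alternating sum -/
def Tsum (m : ℕ) (a : Fin (m + 2) → ℕ) (c : Fin m → ℕ) : XX :=
  ∑ σ : Perm (Fin (m + 2)), ((Perm.sign σ : ℤˣ) : ℤ) •
    dshW (interleaveW (List.ofFn fun i : Fin (m + 1) => a (σ i.succ)) (List.ofFn c)) [a (σ 0)]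

theorem Tsum_zero (m : ℕ) : ∀ (a : Fin (m + 2) → ℕ) (c : Fin m → ℕ), Tsum m a c = 0 := by
  induction m with
  | zero =>
    intro a c
    rw [Tsum]
    have hw : ∀ σ : Perm (Fin 2),
        interleaveW (List.ofFn fun i : Fin 1 => a (σ i.succ)) (List.ofFn c)
          = [a (σ (0 : Fin 1).succ)] := by
      intro σ
      simp [List.ofFn_succ, List.ofFn_zero]
      rfl
    rw [Finset.sum_congr rfl fun σ _ => by rw [hw σ]]
    refine alt_vanish (fun σ => dshW [a (σ (0 : Fin 1).succ)] [a (σ 0)]) 0 (0 : Fin 1).succ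
      (Fin.succ_ne_zero _).symm (fun σ => ?_)
    rw [apply_mul_swap_left, apply_mul_swap_right, dshW_single_comm]
  | succ k ih =>
    intro a c
    have h10 : (0 : Fin (k+3)) ≠ Fin.succ (0 : Fin (k+2)) := ne_s1_0.symm
    have hsplit : ∀ (g : Fin (k+1) → ℕ) (d : Fin k → ℕ),
        interleaveW (List.ofFn g) (List.ofFn d)
          = g 0 :: restI (List.ofFn fun i : Fin k => g i.succ) (List.ofFn d) := by
      intro g d
      rw [List.ofFn_succ]
      exact interleaveW_cons _ _ _
    have hword : ∀ σ : Equiv.Perm (Fin (k+3)),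
        interleaveW (List.ofFn fun i : Fin (k+2) => a (σ i.succ)) (List.ofFn c)
          = a (σ (Fin.succ (0 : Fin (k+2)))) :: c 0 :: a (σ ((0 : Fin (k+1)).succ.succ)) :: restI (List.ofFn fun i : Fin k => a (σ i.succ.succ.succ)) (List.ofFn fun i : Fin k => c i.succ) := by
      intro σ
      simp only [List.ofFn_succ, interleaveW_cons, restI]
    have hRinv : ∀ (σ : Equiv.Perm (Fin (k+3))) (t : Fin (k+3)),
        (∀ i : Fin k, (i.succ.succ.succ : Fin (k+3)) ≠ t) →
        (List.ofFn fun i : Fin k => a ((σ * Equiv.swap 0 t) i.succ.succ.succ))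
          = List.ofFn fun i : Fin k => a (σ i.succ.succ.succ) := by
      intro σ t ht
      exact congrArg List.ofFn (funext fun i => by
        rw [apply_mul_swap_of_ne σ _ _ _ (ne_i3_0 i) (ht i)])
    have hsummand : ∀ σ : Equiv.Perm (Fin (k+3)),
        ((Equiv.Perm.sign σ : ℤˣ) : ℤ) • dshW (interleaveW (List.ofFn fun i : Fin (k+2) => a (σ i.succ)) (List.ofFn c)) [a (σ 0)]
          = ((Equiv.Perm.sign σ : ℤˣ) : ℤ) • consX (a (σ (Fin.succ (0 : Fin (k+2))))) (consX (c 0) (dshW (a (σ ((0 : Fin (k+1)).succ.succ)) :: restI (List.ofFn fun i : Fin k => a (σ i.succ.succ.succ)) (List.ofFn fun i : Fin k => c i.succ)) [a (σ 0)])) + ((Equiv.Perm.sign σ : ℤˣ) : ℤ) • (wX (a (σ 0) :: a (σ (Fin.succ (0 : Fin (k+2)))) :: c 0 :: a (σ ((0 : Fin (k+1)).succ.succ)) :: restI (List.ofFn fun i : Fin k => a (σ i.succ.succ.succ)) (List.ofFn fun i : Fin k => c i.succ)) + wX (a (σ (Fin.succ (0 : Fin (k+2)))) :: a (σ 0) ::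 c 0 :: a (σ ((0 : Fin (k+1)).succ.succ)) :: restI (List.ofFn fun i : Fin k => a (σ i.succ.succ.succ)) (List.ofFn fun i : Fin k => c i.succ))) - ((Equiv.Perm.sign σ : ℤˣ) : ℤ) • wX (a (σ (Fin.succ (0 : Fin (k+2)))) :: (a (σ ((0 : Fin (k+1)).succ.succ)) + (c 0 + a (σ 0))) :: restI (List.ofFn fun i : Fin k => a (σ i.succ.succ.succ)) (List.ofFn fun i : Fin k => c i.succ)) - ((Equiv.Perm.sign σ : ℤˣ) : ℤ) • wX ((c 0 + (a (σ (Fin.succ (0 : Fin (k+2)))) + a (σ 0))) :: a (σ ((0 : Fin (k+1)).succ.succ)) :: restI (List.ofFn fun i : Fin k => a (σ i.succ.succ.succ)) (List.ofFn fun i : Fin k => c i.succ)) := by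
      intro σ
      rw [hword σ, dshW_expand2, smul_sub, smul_sub, smul_add]
    have hS2 : ∑ σ : Equiv.Perm (Fin (k+3)), ((Equiv.Perm.sign σ : ℤˣ) : ℤ) • (wX (a (σ 0) :: a (σ (Fin.succ (0 : Fin (k+2)))) :: c 0 :: a (σ ((0 : Fin (k+1)).succ.succ)) :: restI (List.ofFn fun i : Fin k => a (σ i.succ.succ.succ)) (List.ofFn fun i : Fin k => c i.succ)) + wX (a (σ (Fin.succ (0 : Fin (k+2)))) :: a (σ 0) :: c 0 :: a (σ ((0 : Fin (k+1)).succ.succ)) :: restI (List.ofFn fun i : Fin k => a (σ i.succ.succ.succ)) (List.ofFn fun i : Fin k => c i.succ))) = 0 := by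
      refine alt_vanish _ 0 (Fin.succ (0 : Fin (k+2))) h10 fun σ => ?_
      rw [apply_mul_swap_left, apply_mul_swap_right,
        apply_mul_swap_of_ne σ _ _ _ ne_s2_0 ne_s2_s1, hRinv σ _ (fun i => ne_i3_s1 i)]
      exact add_comm _ _
    have hS3 : ∑ σ : Equiv.Perm (Fin (k+3)), ((Equiv.Perm.sign σ : ℤˣ) : ℤ) • wX (a (σ (Fin.succ (0 : Fin (k+2)))) :: (a (σ ((0 : Fin (k+1)).succ.succ)) + (c 0 + a (σ 0))) :: restI (List.ofFn fun i : Fin k => a (σ i.succ.succ.succ)) (List.ofFn fun i : Fin k => c i.succ)) = 0 := by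
      refine alt_vanish _ 0 ((0 : Fin (k+1)).succ.succ) ne_s2_0.symm fun σ => ?_
      rw [apply_mul_swap_left, apply_mul_swap_right,
        apply_mul_swap_of_ne σ _ _ _ ne_s1_0 ne_s1_s2, hRinv σ _ (fun i => ne_i3_s2 i),
        show a (σ 0) + (c 0 + a (σ ((0 : Fin (k+1)).succ.succ)))
            = a (σ ((0 : Fin (k+1)).succ.succ)) + (c 0 + a (σ 0)) by omega]
    have hS4 : ∑ σ : Equiv.Perm (Fin (k+3)), ((Equiv.Perm.sign σ : ℤˣ) : ℤ) • wX ((c 0 + (a (σ (Fin.succ (0 : Fin (k+2)))) + a (σ 0))) :: a (σ ((0 : Fin (k+1)).succ.succ)) :: restI (List.ofFn fun i : Fin k => a (σ i.succ.succ.succ)) (List.ofFn fun i : Fin k => c i.succ)) = 0 := by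
      refine alt_vanish _ 0 (Fin.succ (0 : Fin (k+2))) h10 fun σ => ?_
      rw [apply_mul_swap_left, apply_mul_swap_right,
        apply_mul_swap_of_ne σ _ _ _ ne_s2_0 ne_s2_s1, hRinv σ _ (fun i => ne_i3_s1 i),
        show c 0 + (a (σ 0) + a (σ (Fin.succ (0 : Fin (k+2)))))
            = c 0 + (a (σ (Fin.succ (0 : Fin (k+2)))) + a (σ 0)) by omega]
    have hS1 : ∑ σ : Equiv.Perm (Fin (k+3)), ((Equiv.Perm.sign σ : ℤˣ) : ℤ) • consX (a (σ (Fin.succ (0 : Fin (k+2))))) (consX (c 0) (dshW (a (σ ((0 : Fin (k+1)).succ.succ)) :: restI (List.ofFn fun i : Fin k => a (σ i.succ.succ.succ)) (List.ofFn fun i : Fin k => c i.succ)) [a (σ 0)])) = 0 := by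
      rw [← Fintype.sum_equiv
        (Equiv.Perm.decomposeFin.symm.trans
          (Equiv.mulRight (Equiv.swap (0 : Fin (k+3)) (Fin.succ (0 : Fin (k+2))))))
        _ _ (fun pe => rfl)]
      rw [Fintype.sum_prod_type]
      refine Finset.sum_eq_zero fun p _ => ?_
      have hsgn : ∀ e : Equiv.Perm (Fin (k+2)),
          ((Equiv.Perm.sign (Equiv.Perm.decomposeFin.symm (p, e)
              * Equiv.swap (0 : Fin (k+3)) (Fin.succ (0 : Fin (k+2)))) : ℤˣ) : ℤ)
            = (-(if p = 0 then (1:ℤ) else -1)) * ((Equiv.Perm.sign e : ℤˣ) : ℤ) := by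
        intro e
        rw [Equiv.Perm.sign_mul, Equiv.Perm.sign_swap h10,
          Equiv.Perm.decomposeFin.symm_sign]
        split_ifs <;> simp [Units.val_mul]
      have key : ∀ e : Equiv.Perm (Fin (k+2)),
          ((Equiv.Perm.sign (Equiv.Perm.decomposeFin.symm (p, e)
              * Equiv.swap (0 : Fin (k+3)) (Fin.succ (0 : Fin (k+2)))) : ℤˣ) : ℤ) •
            consX (a ((Equiv.Perm.decomposeFin.symm (p, e)
              * Equiv.swap (0 : Fin (k+3)) (Fin.succ (0 : Fin (k+2)))) (Fin.succ (0 : Fin (k+2)))))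
              (consX (c 0) (dshW (a ((Equiv.Perm.decomposeFin.symm (p, e)
                  * Equiv.swap (0 : Fin (k+3)) (Fin.succ (0 : Fin (k+2)))) ((0 : Fin (k+1)).succ.succ))
                :: restI (List.ofFn fun i : Fin k => a ((Equiv.Perm.decomposeFin.symm (p, e)
                  * Equiv.swap (0 : Fin (k+3)) (Fin.succ (0 : Fin (k+2)))) i.succ.succ.succ))
                  (List.ofFn fun i : Fin k => c i.succ))
                [a ((Equiv.Perm.decomposeFin.symm (p, e)
                  * Equiv.swap (0 : Fin (k+3)) (Fin.succ (0 : Fin (k+2)))) 0)]))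
          = (-(if p = 0 then (1:ℤ) else -1)) • (((Equiv.Perm.sign e : ℤˣ) : ℤ) •
              ((consX (a p)).comp (consX (c 0)))
                (dshW (interleaveW
                    (List.ofFn fun i : Fin (k+1) => a (Equiv.swap (0 : Fin (k+3)) p (e i.succ).succ))
                    (List.ofFn fun i : Fin k => c i.succ))
                  [a (Equiv.swap (0 : Fin (k+3)) p (e 0).succ)])) := by
        intro e
        have h0 : (Equiv.Perm.decomposeFin.symm (p, e)
            * Equiv.swap (0 : Fin (k+3)) (Fin.succ (0 : Fin (k+2)))) 0
              = Equiv.swap (0 : Fin (k+3)) p ((e 0).succ) := by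
          rw [apply_mul_swap_left]
          exact Equiv.Perm.decomposeFin_symm_apply_succ e p 0
        have h1 : (Equiv.Perm.decomposeFin.symm (p, e)
            * Equiv.swap (0 : Fin (k+3)) (Fin.succ (0 : Fin (k+2)))) (Fin.succ (0 : Fin (k+2))) = p := by
          rw [apply_mul_swap_right]
          exact Equiv.Perm.decomposeFin_symm_apply_zero p e
        have h2 : (Equiv.Perm.decomposeFin.symm (p, e)
            * Equiv.swap (0 : Fin (k+3)) (Fin.succ (0 : Fin (k+2)))) ((0 : Fin (k+1)).succ.succ)
              = Equiv.swap (0 : Fin (k+3)) p ((e (0 : Fin (k+1)).succ).succ) := by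
          rw [apply_mul_swap_of_ne _ _ _ _ ne_s2_0 ne_s2_s1]
          exact Equiv.Perm.decomposeFin_symm_apply_succ e p (0 : Fin (k+1)).succ
        have h3 : (List.ofFn fun i : Fin k => a ((Equiv.Perm.decomposeFin.symm (p, e)
              * Equiv.swap (0 : Fin (k+3)) (Fin.succ (0 : Fin (k+2)))) i.succ.succ.succ))
            = List.ofFn fun i : Fin k => a (Equiv.swap (0 : Fin (k+3)) p (e i.succ.succ).succ) := by
          refine congrArg List.ofFn (funext fun i => congrArg a ?_)
          rw [apply_mul_swap_of_ne _ _ _ _ (ne_i3_0 i) (ne_i3_s1 i)]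
          exact Equiv.Perm.decomposeFin_symm_apply_succ e p i.succ.succ
        rw [hsgn e, h0, h1, h2, h3, mul_smul,
          hsplit (fun i : Fin (k+1) => a (Equiv.swap (0 : Fin (k+3)) p (e i.succ).succ))
            (fun i : Fin k => c i.succ)]
        rfl
      refine Eq.trans (Finset.sum_congr rfl fun e _ => key e) ?_
      rw [← Finset.smul_sum]
      refine smul_eq_zero_of_right _ ?_
      have hz : (∑ e : Equiv.Perm (Fin (k+2)), ((Equiv.Perm.sign e : ℤˣ) : ℤ) •
          dshW (interleaveW
              (List.ofFn fun i : Fin (k+1) => a (Equiv.swap (0 : Fin (k+3)) p (e i.succ).succ))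
              (List.ofFn fun i : Fin k => c i.succ))
            [a (Equiv.swap (0 : Fin (k+3)) p (e 0).succ)]) = 0 :=
        ih (fun j : Fin (k+2) => a (Equiv.swap (0 : Fin (k+3)) p j.succ)) (fun i : Fin k => c i.succ)
      calc ∑ e : Equiv.Perm (Fin (k+2)), ((Equiv.Perm.sign e : ℤˣ) : ℤ) •
              ((consX (a p)).comp (consX (c 0))) (dshW (interleaveW
                (List.ofFn fun i : Fin (k+1) => a (Equiv.swap (0 : Fin (k+3)) p (e i.succ).succ))
                (List.ofFn fun i : Fin k => c i.succ))
                [a (Equiv.swap (0 : Fin (k+3)) p (e 0).succ)])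
          = ((consX (a p)).comp (consX (c 0))) (∑ e : Equiv.Perm (Fin (k+2)),
              ((Equiv.Perm.sign e : ℤˣ) : ℤ) • dshW (interleaveW
                (List.ofFn fun i : Fin (k+1) => a (Equiv.swap (0 : Fin (k+3)) p (e i.succ).succ))
                (List.ofFn fun i : Fin k => c i.succ))
                [a (Equiv.swap (0 : Fin (k+3)) p (e 0).succ)]) := by
            rw [map_sum]
            exact Finset.sum_congr rfl fun e _ => (map_zsmul _ _ _).symm
        _ = 0 := by rw [hz, map_zero]
    rw [Tsum]
    calc ∑ σ : Equiv.Perm (Fin (k+3)),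
          ((Equiv.Perm.sign σ : ℤˣ) : ℤ) • dshW (interleaveW (List.ofFn fun i : Fin (k+2) => a (σ i.succ)) (List.ofFn c)) [a (σ 0)]
        = ∑ σ : Equiv.Perm (Fin (k+3)), (((Equiv.Perm.sign σ : ℤˣ) : ℤ) • consX (a (σ (Fin.succ (0 : Fin (k+2))))) (consX (c 0) (dshW (a (σ ((0 : Fin (k+1)).succ.succ)) :: restI (List.ofFn fun i : Fin k => a (σ i.succ.succ.succ)) (List.ofFn fun i : Fin k => c i.succ)) [a (σ 0)])) + ((Equiv.Perm.sign σ : ℤˣ) : ℤ) • (wX (a (σ 0) :: a (σ (Fin.succ (0 : Fin (k+2)))) :: c 0 :: a (σ ((0 : Fin (k+1)).succ.succ)) :: restI (List.ofFn fun i : Fin k => a (σ i.succ.succ.succ)) (List.ofFn fun i : Fin k => c i.succ)) + wX (a (σ (Fin.succ (0 : Fin (k+2)))) :: a (σ 0) :: c 0 :: a (σ ((0 : Fin (k+1)).succ.succ)) :: restI (List.ofFn fun i : Fin k => a (σ i.succ.succ.succ)) (List.ofFn fun i : Fin k => c i.succ))) - ((Equiv.Perm.sign σ : ℤˣ) : ℤ)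 • wX (a (σ (Fin.succ (0 : Fin (k+2)))) :: (a (σ ((0 : Fin (k+1)).succ.succ)) + (c 0 + a (σ 0))) :: restI (List.ofFn fun i : Fin k => a (σ i.succ.succ.succ)) (List.ofFn fun i : Fin k => c i.succ)) - ((Equiv.Perm.sign σ : ℤˣ) : ℤ) • wX ((c 0 + (a (σ (Fin.succ (0 : Fin (k+2)))) + a (σ 0))) :: a (σ ((0 : Fin (k+1)).succ.succ)) :: restI (List.ofFn fun i : Fin k => a (σ i.succ.succ.succ)) (List.ofFn fun i : Fin k => c i.succ))) :=
          Finset.sum_congr rfl (fun σ _ => hsummand σ)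
      _ = ((∑ σ : Equiv.Perm (Fin (k+3)), ((Equiv.Perm.sign σ : ℤˣ) : ℤ) • consX (a (σ (Fin.succ (0 : Fin (k+2))))) (consX (c 0) (dshW (a (σ ((0 : Fin (k+1)).succ.succ)) :: restI (List.ofFn fun i : Fin k => a (σ i.succ.succ.succ)) (List.ofFn fun i : Fin k => c i.succ)) [a (σ 0)]))) + ∑ σ : Equiv.Perm (Fin (k+3)), ((Equiv.Perm.sign σ : ℤˣ) : ℤ) • (wX (a (σ 0) :: a (σ (Fin.succ (0 : Fin (k+2)))) :: c 0 :: a (σ ((0 : Fin (k+1)).succ.succ)) :: restI (List.ofFn fun i : Fin k => a (σ i.succ.succ.succ)) (List.ofFn fun i : Fin k => c i.succ)) + wX (a (σ (Fin.succ (0 : Fin (k+2)))) :: a (σ 0) :: c 0 :: a (σ ((0 : Fin (k+1)).succ.succ)) :: restI (List.ofFn fun i : Fin k => a (σ i.succ.succ.succ)) (List.ofFn fun i : Fin k => c i.succ))))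
          - (∑ σ : Equiv.Perm (Fin (k+3)), ((Equiv.Perm.sign σ : ℤˣ) : ℤ) • wX (a (σ (Fin.succ (0 : Fin (k+2)))) :: (a (σ ((0 : Fin (k+1)).succ.succ)) + (c 0 + a (σ 0))) :: restI (List.ofFn fun i : Fin k => a (σ i.succ.succ.succ)) (List.ofFn fun i : Fin k => c i.succ)))
          - ∑ σ : Equiv.Perm (Fin (k+3)), ((Equiv.Perm.sign σ : ℤˣ) : ℤ) • wX ((c 0 + (a (σ (Fin.succ (0 : Fin (k+2)))) + a (σ 0))) :: a (σ ((0 : Fin (k+1)).succ.succ)) :: restI (List.ofFn fun i : Fin k => a (σ i.succ.succ.succ)) (List.ofFn fun i : Fin k => c i.succ)) := by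
          rw [Finset.sum_sub_distrib, Finset.sum_sub_distrib, Finset.sum_add_distrib]
      _ = 0 := by rw [hS1, hS2, hS3, hS4]; simp

section NE2
variable {k : ℕ}
lemma ne_i2_0 (i : Fin k) : (i.succ.succ : Fin (k+2)) ≠ 0 := Fin.succ_ne_zero _
lemma ne_i2_s1 (i : Fin k) : (i.succ.succ : Fin (k+2)) ≠ Fin.succ (0 : Fin (k+1)) :=
  fun h => Fin.succ_ne_zero _ (Fin.succ_inj.mp h)
end NE2


end Aux

/-- Proposition `odd_alt_sum_in_msh`. -/
theorem alt_sum_mem_diamondSpan (n : ℕ) (hn : 1 ≤ n) (a : Fin (n + 1) → ℕ) (b : Fin n → ℕ)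
    (ha : ∀ i, 1 ≤ a i) (hb : ∀ i, 1 ≤ b i) :
    (∑ σ : Equiv.Perm (Fin (n + 1)),
        ((Equiv.Perm.sign σ : ℤˣ) : ℤ) •
          wX (interleaveW (List.ofFn fun i => a (σ i)) (List.ofFn b))) ∈ diamondSpan := by
  cases n with
  | zero => exact absurd hn (by norm_num)
  | succ k =>
  have hsplit : ∀ (g : Fin (k+1) → ℕ) (d : Fin k → ℕ),
      interleaveW (List.ofFn g) (List.ofFn d)
        = g 0 :: restI (List.ofFn fun i : Fin k => g i.succ) (List.ofFn d) := by
    intro g d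
    rw [List.ofFn_succ]
    exact interleaveW_cons _ _ _
  have hv : ∀ σ : Equiv.Perm (Fin (k+2)),
      interleaveW (List.ofFn fun i : Fin (k+2) => a (σ i)) (List.ofFn b)
        = a (σ 0) :: b 0 :: interleaveW (List.ofFn fun i : Fin (k+1) => a (σ i.succ))
            (List.ofFn fun i : Fin k => b i.succ) := by
    intro σ
    rw [List.ofFn_succ (f := fun i : Fin (k+2) => a (σ i)), List.ofFn_succ (f := b)]
    rfl
  have main_eq : ∀ σ : Equiv.Perm (Fin (k+2)),
      ((Equiv.Perm.sign σ : ℤˣ) : ℤ) •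
          wX (interleaveW (List.ofFn fun i => a (σ i)) (List.ofFn b))
        = ((Equiv.Perm.sign σ : ℤˣ) : ℤ) •
            dshW (b 0 :: interleaveW (List.ofFn fun i : Fin (k+1) => a (σ i.succ))
              (List.ofFn fun i : Fin k => b i.succ)) [a (σ 0)]
          - ((Equiv.Perm.sign σ : ℤˣ) : ℤ) •
            consX (b 0) (dshW (interleaveW (List.ofFn fun i : Fin (k+1) => a (σ i.succ))
              (List.ofFn fun i : Fin k => b i.succ)) [a (σ 0)])
          + ((Equiv.Perm.sign σ : ℤˣ) : ℤ) •
            wX ((a (σ (Fin.succ (0 : Fin (k+1)))) + (b 0 + a (σ 0))) ::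
              restI (List.ofFn fun i : Fin k => a (σ i.succ.succ))
                (List.ofFn fun i : Fin k => b i.succ)) := by
    intro σ
    rw [hv σ, dshW_cons_single,
      hsplit (fun i : Fin (k+1) => a (σ i.succ)) (fun i : Fin k => b i.succ),
      shiftX_wX_cons, smul_sub, smul_add]
    abel
  have hcons : (∑ σ : Equiv.Perm (Fin (k+2)), ((Equiv.Perm.sign σ : ℤˣ) : ℤ) •
      consX (b 0) (dshW (interleaveW (List.ofFn fun i : Fin (k+1) => a (σ i.succ))
        (List.ofFn fun i : Fin k => b i.succ)) [a (σ 0)])) = 0 := by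
    have hz : (∑ σ : Equiv.Perm (Fin (k+2)), ((Equiv.Perm.sign σ : ℤˣ) : ℤ) •
        dshW (interleaveW (List.ofFn fun i : Fin (k+1) => a (σ i.succ))
          (List.ofFn fun i : Fin k => b i.succ)) [a (σ 0)]) = 0 :=
      Tsum_zero k a (fun i => b i.succ)
    calc (∑ σ : Equiv.Perm (Fin (k+2)), ((Equiv.Perm.sign σ : ℤˣ) : ℤ) •
        consX (b 0) (dshW (interleaveW (List.ofFn fun i : Fin (k+1) => a (σ i.succ))
          (List.ofFn fun i : Fin k => b i.succ)) [a (σ 0)]))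
        = consX (b 0) (∑ σ : Equiv.Perm (Fin (k+2)), ((Equiv.Perm.sign σ : ℤˣ) : ℤ) •
            dshW (interleaveW (List.ofFn fun i : Fin (k+1) => a (σ i.succ))
              (List.ofFn fun i : Fin k => b i.succ)) [a (σ 0)]) := by
          rw [map_sum]
          exact Finset.sum_congr rfl fun σ _ => (map_zsmul _ _ _).symm
      _ = 0 := by rw [hz, map_zero]
  have hshift : (∑ σ : Equiv.Perm (Fin (k+2)), ((Equiv.Perm.sign σ : ℤˣ) : ℤ) •
      wX ((a (σ (Fin.succ (0 : Fin (k+1)))) + (b 0 + a (σ 0))) ::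
        restI (List.ofFn fun i : Fin k => a (σ i.succ.succ))
          (List.ofFn fun i : Fin k => b i.succ))) = 0 := by
    refine alt_vanish _ 0 (Fin.succ (0 : Fin (k+1))) (Fin.succ_ne_zero _).symm fun σ => ?_
    have hR : (List.ofFn fun i : Fin k =>
        a ((σ * Equiv.swap 0 (Fin.succ (0 : Fin (k+1)))) i.succ.succ))
          = List.ofFn fun i : Fin k => a (σ i.succ.succ) :=
      congrArg List.ofFn (funext fun i => by
        rw [apply_mul_swap_of_ne σ _ _ _ (ne_i2_0 i) (ne_i2_s1 i)])
    rw [apply_mul_swap_left, apply_mul_swap_right, hR,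
      show a (σ 0) + (b 0 + a (σ (Fin.succ (0 : Fin (k+1)))))
          = a (σ (Fin.succ (0 : Fin (k+1)))) + (b 0 + a (σ 0)) by omega]
  have total : (∑ σ : Equiv.Perm (Fin (k+2)),
      ((Equiv.Perm.sign σ : ℤˣ) : ℤ) •
        wX (interleaveW (List.ofFn fun i => a (σ i)) (List.ofFn b)))
      = ∑ σ : Equiv.Perm (Fin (k+2)), ((Equiv.Perm.sign σ : ℤˣ) : ℤ) •
          dshW (b 0 :: interleaveW (List.ofFn fun i : Fin (k+1) => a (σ i.succ))
            (List.ofFn fun i : Fin k => b i.succ)) [a (σ 0)] := by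
    rw [Finset.sum_congr rfl fun σ _ => main_eq σ, Finset.sum_add_distrib,
      Finset.sum_sub_distrib, hcons, hshift]
    simp
  rw [show (∑ σ : Equiv.Perm (Fin (k+1+1)),
      ((Equiv.Perm.sign σ : ℤˣ) : ℤ) •
        wX (interleaveW (List.ofFn fun i => a (σ i)) (List.ofFn b))) =
      (∑ σ : Equiv.Perm (Fin (k+2)),
      ((Equiv.Perm.sign σ : ℤˣ) : ℤ) •
        wX (interleaveW (List.ofFn fun i => a (σ i)) (List.ofFn b))) from rfl, total]
  refine Submodule.sum_mem _ fun σ _ => ?_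
  refine zsmul_mem ?_ _
  refine Submodule.subset_span ?_
  refine ⟨b 0 :: interleaveW (List.ofFn fun i : Fin (k+1) => a (σ i.succ))
      (List.ofFn fun i : Fin k => b i.succ), [a (σ 0)], by simp, by simp, ?_, ?_, rfl⟩
  · intro x hx
    rcases List.mem_cons.mp hx with h | h
    · exact h ▸ hb 0
    · rcases mem_interleaveW _ _ _ h with h' | h'
      · obtain ⟨j, rfl⟩ := List.mem_ofFn.mp h'
        exact ha _
      · obtain ⟨j, rfl⟩ := List.mem_ofFn.mp h'
        exact hb _
  · intro x hx
    rcases List.mem_singleton.mp hx with rfl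
    exact ha _


end BlockShuffle
end
end

section
/- For every c ≥ 0 and sequences k, l in W'_{2,3} (sequences of 2's and 3's not ending in 2), one has f_{2+2c}(ι(l), ι(k)) = (-1)^c θ(k ⋆ l, {2}^c), where the sum k ⋆ l is extended linearly through θ. -/
noncomputable section
namespace BlockShuffle

/-- Formal `ℚ`-linear combinations of sequences; a sequence `(k_1, …, k_d)` of `2`s and
`3`s is represented by the *reversed* list `[k_d, …, k_1]`, so that appending an entry at
the end of a sequence corresponds to `List.cons`. -/
abbrev QW : Type := List ℕ →₀ ℚ

/-- The operation `⋆` on sequences of `2`s and `3`s (reversed-list representation). -/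
def starW : List ℕ → List ℕ → QW
  | [], k => Finsupp.single k 1
  | k, [] => Finsupp.single k 1
  | 2 :: k, k' => Finsupp.lmapDomain ℚ ℚ (List.cons 2) (starW k k')
  | k, 2 :: k' => Finsupp.lmapDomain ℚ ℚ (List.cons 2) (starW k k')
  | 3 :: k, 3 :: k' =>
      Finsupp.lmapDomain ℚ ℚ (List.cons 3) (starW k (3 :: k')) +
        Finsupp.lmapDomain ℚ ℚ (List.cons 3) (starW (3 :: k) k') +
        Finsupp.lmapDomain ℚ ℚ (fun w => 2 :: 2 :: 2 :: w) (starW k k')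
  | _, _ => 0
  termination_by k k' => k.length + k'.length

/-- Auxiliary map for `ι`: `iotaAux c r` computes `(-1)^{c₀} x_{2(c+c₀)+3} ⋯` where `c₀`
is the number of leading `2`s of `r`. -/
def iotaAux : ℕ → List ℕ → XX
  | c, 2 :: r => -(iotaAux (c + 1) r)
  | c, [] => consX (2 * c + 3) (wX [])
  | c, 3 :: r => consX (2 * c + 3) (iotaAux 0 r)
  | _, _ => 0
  termination_by _ r => r.length

/-- The map `ι : W′_{2,3} → 𝔛`, `ι({2}^{k_d},3,…,{2}^{k_1},3) = (-1)^{k_1+⋯+k_d}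
x_{2k_1+3} ⋯ x_{2k_d+3}`, `ι(∅) = 1` (reversed-list representation). -/
def iotaW : List ℕ → XX
  | [] => wX []
  | 3 :: r => iotaAux 0 r
  | _ => 0

/-- Auxiliary map for `θ`, satisfying `θ(∅·{2}^{k₀}) = (-1)^{k₀} x_{2k₀+2}` and
`θ(k,3,{2}^c) = (-1)^c x_{2c+2} s₁(θ(k))` (reversed-list representation). -/
def thetaAux : ℕ → List ℕ → XX
  | c, 2 :: r => -(thetaAux (c + 1) r)
  | c, [] => wX [2 * c + 2]
  | c, 3 :: r => consX (2 * c + 2) (shiftX 1 (thetaAux 0 r))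
  | _, _ => 0
  termination_by _ r => r.length

/-- The map `θ : W_{2,3} → 𝔛` (reversed-list representation). -/
def thetaW (r : List ℕ) : XX := thetaAux 0 r
/-! ### Auxiliary development -/

def lin (F : List ℕ → XX) : QW →ₗ[ℚ] XX :=
  Finsupp.lsum ℚ fun w => LinearMap.toSpanSingleton ℚ XX (F w)

lemma lin_single (F : List ℕ → XX) (w : List ℕ) (q : ℚ) :
    lin F (Finsupp.single w q) = q • F w := by
  simp [lin]

lemma lin_lmapDomain (F : List ℕ → XX) (g : List ℕ → List ℕ) (x : QW) :
    lin F (Finsupp.lmapDomain ℚ ℚ g x) = lin (fun w => F (g w)) x := by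
  induction x using Finsupp.induction_linear with
  | zero => simp
  | add a b ha hb => simp only [Finsupp.lmapDomain_apply] at ha hb ⊢; simp [Finsupp.mapDomain_add, ha, hb]
  | single w q => simp [Finsupp.lmapDomain_apply, Finsupp.mapDomain_single, lin_single]

lemma lin_map (T : XX →ₗ[ℚ] XX) (F : List ℕ → XX) (x : QW) :
    T (lin F x) = lin (fun w => T (F w)) x := by
  induction x using Finsupp.induction_linear with
  | zero => simp
  | add a b ha hb => simp [Finsupp.mapDomain_add, ha, hb]
  | single w q => simp [lin_single, map_smul]

lemma lin_congr {F G : List ℕ → XX} (h : ∀ w, F w = G w) (x : QW) : lin F x = lin G x := by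
  have : F = G := funext h
  rw [this]

lemma lin_smul_fun (q : ℚ) (F : List ℕ → XX) (x : QW) :
    lin (fun w => q • F w) x = q • lin F x := by
  induction x using Finsupp.induction_linear with
  | zero => simp
  | add a b ha hb => simp [map_add, ha, hb, smul_add]
  | single w r => simp [lin_single, smul_comm q r]

lemma consX_single (a : ℕ) (w : List ℕ) (q : ℚ) :
    consX a (Finsupp.single w q) = Finsupp.single (a :: w) q := by
  simp [consX, Finsupp.lmapDomain_apply, Finsupp.mapDomain_single]

lemma shiftX_single_cons (m i : ℕ) (t : List ℕ) (q : ℚ) :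
    shiftX m (Finsupp.single (i :: t) q) = Finsupp.single ((i + m) :: t) q := by
  simp [shiftX, Finsupp.smul_single]

lemma shiftX_consX (m a : ℕ) (x : XX) : shiftX m (consX a x) = consX (a + m) x := by
  induction x using Finsupp.induction_linear with
  | zero => simp
  | add u v hu hv => simp [map_add, hu, hv]
  | single w q => rw [consX_single, shiftX_single_cons, consX_single]

lemma fL_single (c : ℕ) (u v : List ℕ) (q r : ℚ) :
    fL c (Finsupp.single u q) (Finsupp.single v r) = q • r • fW c u v := by
  simp [fL, LinearMap.toSpanSingleton_apply]
lemma fW_nil_left (c : ℕ) (v : List ℕ) : fW c [] v = wX (c :: v) := by rw [fW]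

lemma fW_nil_right (c : ℕ) (u : List ℕ) : fW c u [] = wX (c :: u) := by
  cases u <;> rw [fW] <;> simp

lemma fW_cons (c a b : ℕ) (u v : List ℕ) :
    fW c (a :: u) (b :: v) =
      consX c (fW a u (b :: v)) + consX c (fW b (a :: u) v) - fW (c + a + b) u v := by
  rw [fW]

lemma fW_succ : ∀ (u v : List ℕ) (c : ℕ), fW (c + 1) u v = shiftX 1 (fW c u v)
  | [], v, c => by
      rw [fW_nil_left, fW_nil_left, wX, wX, shiftX_single_cons]
  | a :: u, [], c => by
      rw [fW_nil_right, fW_nil_right, wX, wX, shiftX_single_cons]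
  | a :: u, b :: v, c => by
      rw [fW_cons, fW_cons, map_sub, map_add, shiftX_consX, shiftX_consX]
      have h : c + 1 + a + b = (c + a + b) + 1 := by omega
      rw [h, fW_succ u v (c + a + b)]
  termination_by u v _ => u.length + v.length

lemma fL_succ (c : ℕ) (x y : XX) : fL (c + 1) x y = shiftX 1 (fL c x y) := by
  induction x using Finsupp.induction_linear with
  | zero => simp
  | add a b ha hb => simp [map_add, LinearMap.add_apply, ha, hb]
  | single u q =>
    induction y using Finsupp.induction_linear with
    | zero => simp
    | add a b ha hb => simp [map_add, ha, hb]
    | single v r => rw [fL_single, fL_single, fW_succ, map_smul, map_smul]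

lemma fL_one_right (c : ℕ) (x : XX) : fL c x (wX []) = consX c x := by
  induction x using Finsupp.induction_linear with
  | zero => simp
  | add a b ha hb => simp [map_add, LinearMap.add_apply, ha, hb]
  | single u q => rw [wX, fL_single, fW_nil_right, wX, consX_single, Finsupp.smul_single]; simp

lemma fL_one_left (c : ℕ) (y : XX) : fL c (wX []) y = consX c y := by
  induction y using Finsupp.induction_linear with
  | zero => simp
  | add a b ha hb => simp [map_add, ha, hb]
  | single v r => rw [wX, fL_single, fW_nil_left, wX, consX_single, Finsupp.smul_single]; simp

lemma fL_rec (c a b : ℕ) (x y : XX) :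
    fL c (consX a x) (consX b y) =
      consX c (fL a x (consX b y)) + consX c (fL b (consX a x) y) - fL (c + a + b) x y := by
  induction x using Finsupp.induction_linear with
  | zero => simp
  | add x₁ x₂ h₁ h₂ =>
      simp only [map_add, LinearMap.add_apply] at h₁ h₂ ⊢
      rw [h₁, h₂]; abel
  | single u q =>
    induction y using Finsupp.induction_linear with
    | zero => simp
    | add y₁ y₂ h₁ h₂ =>
        simp only [map_add] at h₁ h₂ ⊢
        rw [h₁, h₂]; abel
    | single v r =>
        rw [consX_single, consX_single, fL_single, fL_single, fL_single, fL_single, fW_cons]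
        simp only [map_sub, map_add, map_smul, smul_sub, smul_add]
lemma iotaAux_two (c : ℕ) (r : List ℕ) : iotaAux c (2 :: r) = -(iotaAux (c + 1) r) := by
  rw [iotaAux]

lemma iotaAux_nil (c : ℕ) : iotaAux c [] = consX (2 * c + 3) (wX []) := by rw [iotaAux]

lemma iotaAux_three (c : ℕ) (r : List ℕ) :
    iotaAux c (3 :: r) = consX (2 * c + 3) (iotaAux 0 r) := by rw [iotaAux]

lemma thetaAux_two (c : ℕ) (r : List ℕ) : thetaAux c (2 :: r) = -(thetaAux (c + 1) r) := by
  rw [thetaAux]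

lemma thetaAux_nil (c : ℕ) : thetaAux c [] = wX [2 * c + 2] := by rw [thetaAux]

lemma thetaAux_three (c : ℕ) (r : List ℕ) :
    thetaAux c (3 :: r) = consX (2 * c + 2) (shiftX 1 (thetaAux 0 r)) := by rw [thetaAux]

lemma iotaW_nil : iotaW [] = wX [] := by rw [iotaW]

lemma iotaW_three (r : List ℕ) : iotaW (3 :: r) = iotaAux 0 r := by rw [iotaW]

lemma iotaAux_eq_shift (r : List ℕ) : ∀ c, iotaAux c r = shiftX 1 (thetaAux c r) := by
  induction r with
  | nil =>
      intro c
      rw [iotaAux_nil, thetaAux_nil, wX, wX, consX_single, shiftX_single_cons]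
  | cons n r ih =>
      intro c
      match n with
      | 0 => rw [iotaAux, thetaAux] <;> simp
      | 1 => rw [iotaAux, thetaAux] <;> simp
      | 2 => rw [iotaAux_two, thetaAux_two, map_neg, ih]
      | 3 => rw [iotaAux_three, thetaAux_three, shiftX_consX, ih 0]
      | (m+4) => rw [iotaAux, thetaAux] <;> simp
lemma thetaAux_rep (m : ℕ) : ∀ (d : ℕ) (r : List ℕ),
    thetaAux d (List.replicate m 2 ++ r) = ((-1 : ℚ) ^ m) • thetaAux (d + m) r := by
  induction m with
  | zero => intro d r; simp
  | succ m ih =>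
      intro d r
      rw [List.replicate_succ, List.cons_append, thetaAux_two, ih (d + 1) r]
      have h : d + 1 + m = d + (m + 1) := by omega
      rw [h, pow_succ]
      simp [smul_smul, mul_comm]

lemma iotaAux_rep (m : ℕ) (d : ℕ) (r : List ℕ) :
    iotaAux d (List.replicate m 2 ++ r) = ((-1 : ℚ) ^ m) • iotaAux (d + m) r := by
  rw [iotaAux_eq_shift, thetaAux_rep, map_smul, ← iotaAux_eq_shift]

lemma thetaAux_W' (c : ℕ) (k : List ℕ) (hk2 : k.head? ≠ some 2) :
    thetaAux c k = consX (2 + 2 * c) (iotaW k) := by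
  have h22 : 2 + 2 * c = 2 * c + 2 := by omega
  match k with
  | [] => rw [thetaAux_nil, iotaW_nil, wX, wX, consX_single, h22]
  | 2 :: r => simp at hk2
  | 3 :: r => rw [thetaAux_three, iotaW_three, ← iotaAux_eq_shift, h22]
  | 0 :: r => rw [thetaAux, iotaW] <;> simp
  | 1 :: r => rw [thetaAux, iotaW] <;> simp
  | (m+4) :: r => rw [thetaAux, iotaW] <;> simp

lemma iotaAux_W' (c : ℕ) (k : List ℕ) (hk2 : k.head? ≠ some 2) :
    iotaAux c k = consX (2 * c + 3) (iotaW k) := by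
  rw [iotaAux_eq_shift, thetaAux_W' c k hk2, shiftX_consX, show 2 + 2 * c + 1 = 2 * c + 3 from by omega]

lemma strip2 : ∀ (s : List ℕ), ∃ (a : ℕ) (s₁ : List ℕ),
    s = List.replicate a 2 ++ s₁ ∧ s₁.head? ≠ some 2 ∧ (∀ x ∈ s₁, x ∈ s) := by
  intro s
  induction s with
  | nil => exact ⟨0, [], by simp, by simp, by simp⟩
  | cons n s ih =>
      by_cases hn : n = 2
      · obtain ⟨a, s₁, h1, h2, h3⟩ := ih
        exact ⟨a + 1, s₁, by simp [List.replicate_succ, hn, h1], h2,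
          fun x hx => List.mem_cons_of_mem _ (h3 x hx)⟩
      · exact ⟨0, n :: s, by simp, by simp [hn],
          fun x hx => hx⟩
lemma starW_nil_left (k : List ℕ) : starW [] k = Finsupp.single k 1 := by rw [starW]

lemma starW_nil_right (k : List ℕ) : starW k [] = Finsupp.single k 1 := by
  cases k <;> rw [starW] <;> simp

lemma starW_two_left (k k' : List ℕ) :
    starW (2 :: k) k' = Finsupp.lmapDomain ℚ ℚ (List.cons 2) (starW k k') := by
  cases k' with
  | nil =>
      rw [starW_nil_right, starW_nil_right]
      simp [Finsupp.lmapDomain_apply, Finsupp.mapDomain_single]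
  | cons n t => rw [starW] <;> simp

lemma starW_two_right (k l : List ℕ) (hk : k.head? ≠ some 2) :
    starW k (2 :: l) = Finsupp.lmapDomain ℚ ℚ (List.cons 2) (starW k l) := by
  match k with
  | [] =>
      rw [starW_nil_left, starW_nil_left]
      simp [Finsupp.lmapDomain_apply, Finsupp.mapDomain_single]
  | 2 :: r => simp at hk
  | 3 :: r => rw [starW] <;> simp
  | 0 :: r => rw [starW] <;> simp
  | 1 :: r => rw [starW] <;> simp
  | (m+4) :: r => rw [starW] <;> simp

lemma starW_33 (k k' : List ℕ) :
    starW (3 :: k) (3 :: k') =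
      Finsupp.lmapDomain ℚ ℚ (List.cons 3) (starW k (3 :: k')) +
        Finsupp.lmapDomain ℚ ℚ (List.cons 3) (starW (3 :: k) k') +
        Finsupp.lmapDomain ℚ ℚ (fun w => 2 :: 2 :: 2 :: w) (starW k k') := by
  rw [starW] <;> simp

lemma lin_starW_rep_left (b : ℕ) : ∀ (F : List ℕ → XX) (r l : List ℕ),
    lin F (starW (List.replicate b 2 ++ r) l) =
      lin (fun w => F (List.replicate b 2 ++ w)) (starW r l) := by
  induction b with
  | zero => intro F r l; simp
  | succ b ih =>
      intro F r l
      rw [List.replicate_succ, List.cons_append, starW_two_left, lin_lmapDomain,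
        ih (fun w => F (2 :: w)) r l]
      exact lin_congr (fun w => by simp [List.replicate_succ]) _

lemma lin_starW_rep_right (a : ℕ) : ∀ (F : List ℕ → XX) (k s : List ℕ),
    k.head? ≠ some 2 →
    lin F (starW k (List.replicate a 2 ++ s)) =
      lin (fun w => F (List.replicate a 2 ++ w)) (starW k s) := by
  induction a with
  | zero => intro F k s _; simp
  | succ a ih =>
      intro F k s hk
      rw [List.replicate_succ, List.cons_append, starW_two_right k _ hk, lin_lmapDomain,
        ih (fun w => F (2 :: w)) k s hk]
      exact lin_congr (fun w => by simp [List.replicate_succ]) _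
lemma neg_one_sq_smul (b : ℕ) (x : XX) : ((-1:ℚ)^b) • ((-1:ℚ)^b) • x = x := by
  rw [smul_smul, ← pow_add, Even.neg_one_pow ⟨b, rfl⟩, one_smul]

lemma head3 (k : List ℕ) (hne : k ≠ []) (hk : ∀ x ∈ k, x = 2 ∨ x = 3)
    (hk2 : k.head? ≠ some 2) : ∃ r, k = 3 :: r := by
  cases k with
  | nil => exact absurd rfl hne
  | cons n t =>
      rcases hk n (by simp) with h | h
      · subst h; simp at hk2
      · exact ⟨t, by rw [h]⟩

lemma base_left (c : ℕ) (l : List ℕ) (hl2 : l.head? ≠ some 2) :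
    fL (2 + 2 * c) (iotaW l) (iotaW []) = lin (thetaAux c) (starW [] l) := by
  rw [iotaW_nil, fL_one_right, starW_nil_left, lin_single, one_smul, thetaAux_W' c l hl2]

lemma base_right (c : ℕ) (k : List ℕ) (hk2 : k.head? ≠ some 2) :
    fL (2 + 2 * c) (iotaW []) (iotaW k) = lin (thetaAux c) (starW k []) := by
  rw [iotaW_nil, fL_one_left, starW_nil_right, lin_single, one_smul, thetaAux_W' c k hk2]

lemma mainE : ∀ (n : ℕ) (k l : List ℕ), k.length + l.length ≤ n →
    (∀ x ∈ k, x = 2 ∨ x = 3) → (∀ x ∈ l, x = 2 ∨ x = 3) →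
    k.head? ≠ some 2 → l.head? ≠ some 2 → ∀ c : ℕ,
    fL (2 + 2 * c) (iotaW l) (iotaW k) = lin (thetaAux c) (starW k l) := by
  intro n
  induction n with
  | zero =>
      intro k l hlen hk hl hk2 hl2 c
      have hk0 : k = [] := List.eq_nil_of_length_eq_zero (by omega)
      subst hk0
      exact base_left c l hl2
  | succ n ih =>
      intro k l hlen hk hl hk2 hl2 c
      rcases eq_or_ne k [] with rfl | hkne
      · exact base_left c l hl2
      rcases eq_or_ne l [] with rfl | hlne
      · exact base_right c k hk2
      obtain ⟨r, rfl⟩ := head3 k hkne hk hk2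
      obtain ⟨s, rfl⟩ := head3 l hlne hl hl2
      obtain ⟨b, r₁, hr, hr₁2, hr₁mem⟩ := strip2 r
      obtain ⟨a, s₁, hs, hs₁2, hs₁mem⟩ := strip2 s
      have hr₁e : ∀ x ∈ r₁, x = 2 ∨ x = 3 :=
        fun x hx => hk x (List.mem_cons_of_mem _ (hr₁mem x hx))
      have hs₁e : ∀ x ∈ s₁, x = 2 ∨ x = 3 :=
        fun x hx => hl x (List.mem_cons_of_mem _ (hs₁mem x hx))
      have hrlen : r₁.length ≤ r.length := by rw [hr, List.length_append]; omega
      have hslen : s₁.length ≤ s.length := by rw [hs, List.length_append]; omega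
      simp only [List.length_cons] at hlen
      -- the odd-index corollary of the induction hypothesis
      have O : ∀ (k' l' : List ℕ), k'.length + l'.length ≤ n →
          (∀ x ∈ k', x = 2 ∨ x = 3) → (∀ x ∈ l', x = 2 ∨ x = 3) →
          k'.head? ≠ some 2 → l'.head? ≠ some 2 → ∀ a' : ℕ,
          fL (2 * a' + 3) (iotaW l') (iotaW k') = lin (iotaAux a') (starW k' l') := by
        intro k' l' h he1 he2 hh1 hh2 a'
        rw [show 2 * a' + 3 = (2 + 2 * a') + 1 from by omega, fL_succ,
          ih k' l' h he1 he2 hh1 hh2 a', lin_map]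
        exact lin_congr (fun w => (iotaAux_eq_shift w a').symm) _
      have O1 : fL (2 * a + 3) (iotaW s₁) (iotaW (3 :: r)) =
          lin (iotaAux a) (starW (3 :: r) s₁) :=
        O (3 :: r) s₁ (by simp only [List.length_cons]; omega) hk hs₁e hk2 hs₁2 a
      have O2 : fL (2 * b + 3) (iotaW (3 :: s)) (iotaW r₁) =
          lin (iotaAux b) (starW r₁ (3 :: s)) :=
        O r₁ (3 :: s) (by simp only [List.length_cons]; omega) hr₁e hl hr₁2 hl2 b
      have E3 : fL (2 + 2 * (c + a + b + 3)) (iotaW s₁) (iotaW r₁) =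
          lin (thetaAux (c + a + b + 3)) (starW r₁ s₁) :=
        ih r₁ s₁ (by omega) hr₁e hs₁e hr₁2 hs₁2 _
      -- element identities
      have hP : iotaW (3 :: r) = ((-1:ℚ)^b) • iotaAux b r₁ := by
        rw [iotaW_three, hr, iotaAux_rep, zero_add]
      have hQ : iotaW (3 :: s) = ((-1:ℚ)^a) • iotaAux a s₁ := by
        rw [iotaW_three, hs, iotaAux_rep, zero_add]
      have hPc : iotaAux b r₁ = consX (2 * b + 3) (iotaW r₁) := iotaAux_W' b r₁ hr₁2
      have hQc : iotaAux a s₁ = consX (2 * a + 3) (iotaW s₁) := iotaAux_W' a s₁ hs₁2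
      have hP' : consX (2 * b + 3) (iotaW r₁) = ((-1:ℚ)^b) • iotaW (3 :: r) := by
        rw [hP, neg_one_sq_smul]; exact hPc.symm
      have hQ' : consX (2 * a + 3) (iotaW s₁) = ((-1:ℚ)^a) • iotaW (3 :: s) := by
        rw [hQ, neg_one_sq_smul]; exact hQc.symm
      -- the left-hand side
      have hLHS : fL (2 + 2 * c) (iotaW (3 :: s)) (iotaW (3 :: r)) =
          ((-1:ℚ)^a) • ((-1:ℚ)^b) •
            (((-1:ℚ)^b) • consX (2 * c + 2) (lin (iotaAux a) (starW (3 :: r) s₁)) +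
             ((-1:ℚ)^a) • consX (2 * c + 2) (lin (iotaAux b) (starW r₁ (3 :: s))) -
             lin (thetaAux (c + a + b + 3)) (starW r₁ s₁)) := by
        rw [hQ, hP, map_smul (fL (2 + 2 * c)), LinearMap.smul_apply, map_smul, hQc, hPc, fL_rec]
        rw [hP', map_smul (fL (2 * a + 3) (iotaW s₁)), O1]
        rw [hQ', map_smul (fL (2 * b + 3)), LinearMap.smul_apply, O2]
        rw [show 2 + 2 * c + (2 * a + 3) + (2 * b + 3) = 2 + 2 * (c + a + b + 3) from by ring,
          E3]
        rw [map_smul (consX (2 + 2 * c)), map_smul (consX (2 + 2 * c))]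
        rw [show 2 + 2 * c = 2 * c + 2 from by omega]
      -- the three pieces of the right-hand side
      have t1 : lin (fun w => thetaAux c (3 :: w)) (starW r (3 :: s)) =
          ((-1:ℚ)^b) • consX (2 * c + 2) (lin (iotaAux b) (starW r₁ (3 :: s))) := by
        rw [hr, lin_starW_rep_left]
        have e := lin_congr
          (F := fun w => thetaAux c (3 :: (List.replicate b 2 ++ w)))
          (G := fun w => ((-1:ℚ)^b) • consX (2 * c + 2) (iotaAux b w))
          (fun w => by
            show thetaAux c (3 :: (List.replicate b 2 ++ w)) =
              ((-1:ℚ)^b) • consX (2 * c + 2) (iotaAux b w)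
            rw [thetaAux_three, ← iotaAux_eq_shift, iotaAux_rep, zero_add, map_smul])
          (starW r₁ (3 :: s))
        rw [e, lin_smul_fun, lin_map (consX (2 * c + 2)) (iotaAux b)]
      have t2 : lin (fun w => thetaAux c (3 :: w)) (starW (3 :: r) s) =
          ((-1:ℚ)^a) • consX (2 * c + 2) (lin (iotaAux a) (starW (3 :: r) s₁)) := by
        rw [hs, lin_starW_rep_right a _ _ _ hk2]
        have e := lin_congr
          (F := fun w => thetaAux c (3 :: (List.replicate a 2 ++ w)))
          (G := fun w => ((-1:ℚ)^a) • consX (2 * c + 2) (iotaAux a w))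
          (fun w => by
            show thetaAux c (3 :: (List.replicate a 2 ++ w)) =
              ((-1:ℚ)^a) • consX (2 * c + 2) (iotaAux a w)
            rw [thetaAux_three, ← iotaAux_eq_shift, iotaAux_rep, zero_add, map_smul])
          (starW (3 :: r) s₁)
        rw [e, lin_smul_fun, lin_map (consX (2 * c + 2)) (iotaAux a)]
      have hlist : ∀ w : List ℕ,
          (2 :: 2 :: 2 :: (List.replicate b 2 ++ (List.replicate a 2 ++ w))) =
            List.replicate (3 + b + a) 2 ++ w := by
        intro w
        simp only [List.replicate_add, List.replicate_succ, List.replicate_zero, List.append_assoc, List.nil_append, List.cons_append]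
      have t3 : lin (fun w => thetaAux c (2 :: 2 :: 2 :: w)) (starW r s) =
          ((-1:ℚ)^(3 + b + a)) • lin (thetaAux (c + a + b + 3)) (starW r₁ s₁) := by
        rw [hr, hs, lin_starW_rep_left, lin_starW_rep_right a _ _ _ hr₁2]
        have e := lin_congr
          (F := fun w => thetaAux c (2 :: 2 :: 2 :: (List.replicate b 2 ++ (List.replicate a 2 ++ w))))
          (G := fun w => ((-1:ℚ)^(3 + b + a)) • thetaAux (c + a + b + 3) w)
          (fun w => by
            show thetaAux c (2 :: 2 :: 2 :: (List.replicate b 2 ++ (List.replicate a 2 ++ w))) =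
              ((-1:ℚ)^(3 + b + a)) • thetaAux (c + a + b + 3) w
            rw [hlist w, thetaAux_rep, show c + (3 + b + a) = c + a + b + 3 from by omega])
          (starW r₁ s₁)
        rw [e, lin_smul_fun]
      -- the right-hand side
      have hRHS : lin (thetaAux c) (starW (3 :: r) (3 :: s)) =
          ((-1:ℚ)^b) • consX (2 * c + 2) (lin (iotaAux b) (starW r₁ (3 :: s))) +
          ((-1:ℚ)^a) • consX (2 * c + 2) (lin (iotaAux a) (starW (3 :: r) s₁)) +
          ((-1:ℚ)^(3 + b + a)) • lin (thetaAux (c + a + b + 3)) (starW r₁ s₁) := by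
        rw [starW_33, map_add, map_add, lin_lmapDomain, lin_lmapDomain, lin_lmapDomain,
          t1, t2, t3]
      rw [hLHS, hRHS]
      have hbb : ((-1:ℚ)^b) * ((-1:ℚ)^b) = 1 := by
        rw [← pow_add]; exact Even.neg_one_pow ⟨b, rfl⟩
      have haa : ((-1:ℚ)^a) * ((-1:ℚ)^a) = 1 := by
        rw [← pow_add]; exact Even.neg_one_pow ⟨a, rfl⟩
      match_scalars
      · linear_combination ((-1:ℚ)^a) * hbb
      · linear_combination ((-1:ℚ)^b) * haa
      · ring
/-- `f_{2+2c}(ι(l), ι(k)) = (-1)^c θ(k ⋆ l, {2}^c)` for `k, l ∈ W′_{2,3}`. -/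
theorem f_iota_eq_theta_star (c : ℕ) (k l : List ℕ)
    (hk : ∀ x ∈ k, x = 2 ∨ x = 3) (hl : ∀ x ∈ l, x = 2 ∨ x = 3)
    (hk2 : k.head? ≠ some 2) (hl2 : l.head? ≠ some 2) :
    fL (2 + 2 * c) (iotaW l) (iotaW k) =
      ((-1 : ℚ) ^ c) •
        Finsupp.lsum ℚ
          (fun r => LinearMap.toSpanSingleton ℚ XX (thetaW (List.replicate c 2 ++ r)))
          (starW k l) := by
  rw [mainE (k.length + l.length) k l le_rfl hk hl hk2 hl2 c]
  have h1 : Finsupp.lsum ℚ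
        (fun r => LinearMap.toSpanSingleton ℚ XX (thetaW (List.replicate c 2 ++ r)))
        (starW k l) =
      lin (fun r => thetaW (List.replicate c 2 ++ r)) (starW k l) := rfl
  have h2 : lin (fun r => thetaW (List.replicate c 2 ++ r)) (starW k l) =
      ((-1 : ℚ) ^ c) • lin (thetaAux c) (starW k l) := by
    have e := lin_congr
      (F := fun r => thetaW (List.replicate c 2 ++ r))
      (G := fun r => ((-1 : ℚ) ^ c) • thetaAux c r)
      (fun w => by
        show thetaW (List.replicate c 2 ++ w) = ((-1 : ℚ) ^ c) • thetaAux c w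
        rw [thetaW, thetaAux_rep, zero_add])
      (starW k l)
    rw [e, lin_smul_fun]
  rw [h1, h2, neg_one_sq_smul]

end BlockShuffle
end
end
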